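/- For Re(s) > 1 and Re(a) > 0, ∫₀^∞ t^{s−1} e^{−at}/(1 + e^{−t}) dt = Γ(s)(−ζ(s,a) + 2^{1−s} ζ(s,a/2)). -/

import Mathlib

open Real Complex MeasureTheory Set Finset

/-- Hurwitz zeta in the series range. -/
noncomputable def zetaSeries (s a : ℂ) : ℂ := ∑' n : ℕ, (a + n) ^ (-s)

/-!
Expanding `1 / (1 + e^{-t})` as a geometric series gives
`e^{-at} / (1 + e^{-t}) = ∑ (-1)^n e^{-(a+n)t}`, and this may be integrated termwise against
`t^{s-1}` because `∑ ∫ |t^{s-1} e^{-(a+n)t}| dt = Γ(Re s) ∑ (Re a + n)^{-Re s} < ∞`.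
The `n`-th term is `Γ(s) (a+n)^{-s}`: the Gamma integral `∫ t^{s-1} e^{-zt} dt = Γ(s) z^{-s}`
holds for real `z > 0`, and both sides are holomorphic in `z` on the right half-plane, so it
holds there by the identity theorem. Splitting the alternating sum into even and odd `n`,
`∑ (-1)^n (a+n)^{-s} = 2 ∑ (a+2k)^{-s} - ζ(s,a) = 2^{1-s} ζ(s,a/2) - ζ(s,a)`.
-/

open scoped Topology

lemma integrableOn_rpow_mul_exp_neg_mul {σ c : ℝ} (hσ : -1 < σ) (hc : 0 < c) :
    IntegrableOn (fun t : ℝ ↦ t ^ σ * rexp (-c * t)) (Ioi 0) := by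
  simpa using integrableOn_rpow_mul_exp_neg_mul_rpow hσ one_pos hc

lemma norm_cpow_mul_cexp_neg_mul (s z : ℂ) {t : ℝ} (ht : 0 < t) :
    ‖(t : ℂ) ^ s * cexp (-z * t)‖ = t ^ s.re * rexp (-z.re * t) := by
  rw [norm_mul, norm_exp, norm_cpow_eq_rpow_re_of_pos ht]
  simp

lemma continuousOn_cpow_mul_cexp_neg_mul (s z : ℂ) :
    ContinuousOn (fun t : ℝ ↦ (t : ℂ) ^ s * cexp (-z * t)) (Ioi 0) :=
  ((continuous_ofReal.continuousOn.cpow_const fun t ht ↦ ofReal_mem_slitPlane.mpr ht).mul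
    (by fun_prop))

lemma integrableOn_cpow_mul_cexp_neg_mul {s z : ℂ} (hs : -1 < s.re) (hz : 0 < z.re) :
    IntegrableOn (fun t : ℝ ↦ (t : ℂ) ^ s * cexp (-z * t)) (Ioi 0) := by
  refine (integrableOn_rpow_mul_exp_neg_mul hs hz).mono'
    ((continuousOn_cpow_mul_cexp_neg_mul s z).aestronglyMeasurable measurableSet_Ioi) ?_
  filter_upwards [ae_restrict_mem measurableSet_Ioi] with t ht
  rw [norm_cpow_mul_cexp_neg_mul s z ht]

lemma hasDerivAt_cpow_mul_cexp_neg_mul (s w : ℂ) {t : ℝ} (ht : 0 < t) :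
    HasDerivAt (fun z : ℂ ↦ (t : ℂ) ^ (s - 1) * cexp (-z * t))
      (-((t : ℂ) ^ s * cexp (-w * t))) w := by
  refine ((((hasDerivAt_id w).neg.mul_const (t : ℂ)).cexp).const_mul _).congr_deriv ?_
  have ht' : (t : ℂ) ≠ 0 := ofReal_ne_zero.mpr ht.ne'
  rw [cpow_sub _ _ ht', cpow_one]
  field_simp
  simp

lemma differentiableAt_integral_cpow_mul_cexp_neg_mul {s : ℂ} (hs : 0 < s.re) {w : ℂ}
    (hw : 0 < w.re) :
    DifferentiableAt ℂ
      (fun z : ℂ ↦ ∫ t in Ioi (0 : ℝ), (t : ℂ) ^ (s - 1) * cexp (-z * t)) w := by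
  have hε : 0 < w.re / 2 := by positivity
  have hre_ball : ∀ z ∈ Metric.ball w (w.re / 2), w.re / 2 ≤ z.re := fun z hz ↦ by
    have := (abs_re_le_norm (z - w)).trans (mem_ball_iff_norm.mp hz).le
    rw [sub_re] at this
    linarith [neg_abs_le (z.re - w.re)]
  refine (hasDerivAt_integral_of_dominated_loc_of_deriv_le
    (F' := fun z t ↦ -((t : ℂ) ^ s * cexp (-z * t)))
    (bound := fun t ↦ t ^ s.re * rexp (-(w.re / 2) * t))
    (Metric.ball_mem_nhds w hε)
    (.of_forall fun z ↦ (continuousOn_cpow_mul_cexp_neg_mul _ z).aestronglyMeasurable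
      measurableSet_Ioi)
    (integrableOn_cpow_mul_cexp_neg_mul (by simpa using hs) hw)
    ((integrableOn_cpow_mul_cexp_neg_mul (by linarith) hw).neg.aestronglyMeasurable)
    ?_ (integrableOn_rpow_mul_exp_neg_mul (by linarith) hε) ?_).2.differentiableAt
  · filter_upwards [ae_restrict_mem measurableSet_Ioi] with t (ht : 0 < t) z hz
    rw [norm_neg, norm_cpow_mul_cexp_neg_mul s z ht]
    gcongr
    nlinarith [hre_ball z hz]
  · filter_upwards [ae_restrict_mem measurableSet_Ioi] with t ht z _
    exact hasDerivAt_cpow_mul_cexp_neg_mul s z ht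

lemma frequently_ofReal_nhdsNE {p : ℂ → Prop} {x : ℝ} (h : ∀ᶠ y : ℝ in 𝓝 x, p y) :
    ∃ᶠ z in 𝓝[≠] (x : ℂ), p z := by
  have hmap : Filter.Tendsto ofReal (𝓝[≠] x) (𝓝[≠] (x : ℂ)) :=
    tendsto_nhdsWithin_of_tendsto_nhds_of_eventually_within _
      (continuous_ofReal.continuousAt.mono_left nhdsWithin_le_nhds)
      (eventually_nhdsWithin_of_forall fun y hy ↦ by simpa using hy)
  exact hmap.frequently (h.filter_mono nhdsWithin_le_nhds).frequently

theorem integral_cpow_mul_cexp_neg_mul_Ioi {s z : ℂ} (hs : 0 < s.re) (hz : 0 < z.re) :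
    ∫ t in Ioi (0 : ℝ), (t : ℂ) ^ (s - 1) * cexp (-z * t) = Gamma s * z ^ (-s) := by
  have hf : AnalyticOnNhd ℂ
      (fun z : ℂ ↦ ∫ t in Ioi (0 : ℝ), (t : ℂ) ^ (s - 1) * cexp (-z * t))
      {z | 0 < z.re} :=
    DifferentiableOn.analyticOnNhd
      (fun w hw ↦ (differentiableAt_integral_cpow_mul_cexp_neg_mul hs hw).differentiableWithinAt)
      (isOpen_lt continuous_const continuous_re)
  have hg : AnalyticOnNhd ℂ (fun z : ℂ ↦ Gamma s * z ^ (-s)) {z | 0 < z.re} := fun w hw ↦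
    analyticAt_const.mul (analyticAt_id.cpow analyticAt_const (.inl hw))
  refine hf.eqOn_of_preconnected_of_frequently_eq hg (convex_halfSpace_re_gt 0).isPreconnected
    (z₀ := ((1 : ℝ) : ℂ)) (by simp) (frequently_ofReal_nhdsNE ?_) hz
  filter_upwards [lt_mem_nhds one_pos] with r hr
  simp_rw [neg_mul]
  rw [integral_cpow_mul_exp_neg_mul_Ioi hs hr, one_div, inv_cpow_ofReal_nonneg hr.le, cpow_neg,
    mul_comm]

theorem hasSum_mellin_cexp {ι : Type*} [Countable ι] {a p : ι → ℂ}
    {F : ℝ → ℂ} {s : ℂ} (hp : ∀ i, 0 < (p i).re) (hs : 0 < s.re)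
    (hF : ∀ t ∈ Ioi (0 : ℝ), HasSum (fun i ↦ a i * cexp (-p i * t)) (F t))
    (h_sum : Summable fun i ↦ ‖a i‖ / (p i).re ^ s.re) :
    HasSum (fun i ↦ Gamma s * a i * p i ^ (-s)) (mellin F s) := by
  simp_rw [mellin, smul_eq_mul, ← setIntegral_congr_fun measurableSet_Ioi
    (fun t ht ↦ congr_arg _ (hF t ht).tsum_eq), ← tsum_mul_left, mul_left_comm _ (a _)]
  have hint i : Integrable (fun t : ℝ ↦ a i * ((t : ℂ) ^ (s - 1) * cexp (-p i * t)))
      (volume.restrict (Ioi 0)) :=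
    (integrableOn_cpow_mul_cexp_neg_mul (by simpa using hs) (hp i)).const_mul _
  have hnorm i : ∫ t in Ioi (0 : ℝ), ‖a i * ((t : ℂ) ^ (s - 1) * cexp (-p i * t))‖ =
      ‖a i‖ / (p i).re ^ s.re * Real.Gamma s.re := by
    rw [setIntegral_congr_fun measurableSet_Ioi fun t (ht : 0 < t) ↦ by
      rw [norm_mul, norm_cpow_mul_cexp_neg_mul _ _ ht, sub_re, one_re, neg_mul],
      integral_const_mul, Real.integral_rpow_mul_exp_neg_mul_Ioi hs (hp i),
      Real.div_rpow zero_le_one (hp i).le, Real.one_rpow]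
    ring
  have hterm i : ∫ t in Ioi (0 : ℝ), a i * ((t : ℂ) ^ (s - 1) * cexp (-p i * t)) =
      Gamma s * a i * p i ^ (-s) := by
    rw [integral_const_mul, integral_cpow_mul_cexp_neg_mul_Ioi hs (hp i)]
    ring
  simpa only [hterm] using hasSum_integral_of_summable_integral_norm hint
    (by simpa only [hnorm] using h_sum.mul_right (Real.Gamma s.re))

lemma hasSum_neg_one_pow_mul_cexp_neg_mul (a : ℂ) {t : ℝ} (ht : 0 < t) :
    HasSum (fun n : ℕ ↦ (-1) ^ n * cexp (-(a + n) * t)) (cexp (-a * t) / (1 + cexp (-t))) := by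
  have hr : ‖-cexp (-t)‖ < 1 := by
    rw [norm_neg, ← ofReal_neg, norm_exp_ofReal, Real.exp_lt_one_iff]
    exact neg_lt_zero.mpr ht
  have hterm (n : ℕ) : cexp (-a * t) * (-cexp (-t)) ^ n = (-1) ^ n * cexp (-(a + n) * t) := by
    rw [neg_pow, ← Complex.exp_nat_mul, mul_left_comm, ← Complex.exp_add]
    ring_nf
  simpa only [hterm, sub_neg_eq_add, div_eq_mul_inv] using
    (hasSum_geometric_of_norm_lt_one hr).mul_left (cexp (-a * t))

lemma hasSum_neg_one_pow_mul {R : Type*} [NormedRing R] [CompleteSpace R] {f : ℕ → R}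
    (hf : Summable f) :
    HasSum (fun n ↦ (-1) ^ n * f n) (2 * ∑' k, f (2 * k) - ∑' n, f n) := by
  have he : Summable fun k ↦ f (2 * k) := hf.comp_injective (mul_right_injective₀ two_ne_zero)
  have ho : Summable fun k ↦ f (2 * k + 1) := hf.comp_injective fun _ _ h ↦ by omega
  rw [← tsum_even_add_odd he ho, two_mul, add_sub_add_left_eq_sub, sub_eq_add_neg]
  refine HasSum.even_add_odd (f := fun n ↦ (-1) ^ n * f n) ?_ ?_
  · simpa [pow_mul] using he.hasSum
  · simpa [pow_succ, pow_mul] using ho.hasSum.neg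

lemma re_add_natCast_pos {a : ℂ} (ha : 0 < a.re) (n : ℕ) : 0 < (a + n).re := by
  rw [add_re, natCast_re]
  positivity

lemma summable_one_div_re_add_nat_rpow {a : ℂ} (ha : 0 < a.re) {σ : ℝ} (hσ : 1 < σ) :
    Summable fun n : ℕ ↦ 1 / (a + n).re ^ σ := by
  refine ((Real.summable_one_div_nat_add_rpow a.re σ).mpr hσ).congr fun n ↦ ?_
  rw [add_re, natCast_re, abs_of_pos (by positivity), add_comm]

lemma norm_cpow_neg_le {z : ℂ} (hz : 0 < z.re) {s : ℂ} (hs : 0 ≤ s.re) :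
    ‖z ^ (-s)‖ ≤ rexp (π * |s.im|) * (1 / z.re ^ s.re) := by
  refine (norm_cpow_le z (-s)).trans ?_
  rw [div_eq_mul_inv, ← Real.exp_neg, mul_comm, one_div, ← Real.rpow_neg hz.le, neg_re]
  refine mul_le_mul (Real.exp_le_exp.mpr ?_)
    (Real.rpow_le_rpow_of_nonpos hz (re_le_norm z) (neg_nonpos.mpr hs)) (by positivity)
    (by positivity)
  rw [neg_im, mul_neg, neg_neg]
  exact (le_abs_self _).trans
    (abs_mul z.arg s.im ▸ mul_le_mul_of_nonneg_right (abs_arg_le_pi z) (abs_nonneg _))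

lemma summable_cpow_neg_add_nat {s a : ℂ} (hs : 1 < s.re) (ha : 0 < a.re) :
    Summable fun n : ℕ ↦ (a + n) ^ (-s) :=
  ((summable_one_div_re_add_nat_rpow ha hs).mul_left _).of_norm_bounded fun n ↦
    norm_cpow_neg_le (re_add_natCast_pos ha n) (by linarith)

lemma ofReal_mul_cpow {r : ℝ} (hr : 0 < r) {x : ℂ} (hx : x ≠ 0) (s : ℂ) :
    ((r : ℂ) * x) ^ s = (r : ℂ) ^ s * x ^ s := by
  have hr' : (r : ℂ) ≠ 0 := ofReal_ne_zero.mpr hr.ne'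
  rw [cpow_def_of_ne_zero (mul_ne_zero hr' hx), log_ofReal_mul hr hx, add_mul, Complex.exp_add,
    ← cpow_def_of_ne_zero hx, cpow_def_of_ne_zero hr', ofReal_log hr.le]

lemma tsum_cpow_neg_add_two_mul_nat {s a : ℂ} (ha : 0 < a.re) :
    ∑' k : ℕ, (a + (2 * k : ℕ)) ^ (-s) = 2 ^ (-s) * zetaSeries s (a / 2) := by
  rw [zetaSeries, ← tsum_mul_left]
  congr 1 with k
  have hk : a / 2 + k ≠ 0 := fun h ↦ by
    simpa [h] using re_add_natCast_pos (show 0 < (a / 2).re by simpa using ha) k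
  rw [show a + (2 * k : ℕ) = ((2 : ℝ) : ℂ) * (a / 2 + k) by push_cast; ring,
    ofReal_mul_cpow two_pos hk, ofReal_ofNat]

lemma hasSum_neg_one_pow_mul_cpow_neg_add_nat {s a : ℂ} (hs : 1 < s.re) (ha : 0 < a.re) :
    HasSum (fun n : ℕ ↦ (-1) ^ n * (a + n) ^ (-s))
      (-zetaSeries s a + 2 ^ (1 - s) * zetaSeries s (a / 2)) := by
  have h2 : (2 : ℂ) ^ (1 - s) = 2 * 2 ^ (-s) := by
    rw [sub_eq_add_neg, cpow_add _ _ two_ne_zero, cpow_one]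
  rw [h2, mul_assoc, ← tsum_cpow_neg_add_two_mul_nat ha, neg_add_eq_sub]
  exact hasSum_neg_one_pow_mul (summable_cpow_neg_add_nat hs ha)

theorem stmt_10 (s a : ℂ) (hs : 1 < s.re) (ha : 0 < a.re) :
    ∫ t in Ioi (0 : ℝ),
        (t : ℂ) ^ (s - 1) * Complex.exp (-a * t) / (1 + Complex.exp (-(t : ℂ))) =
      Complex.Gamma s * (-zetaSeries s a + 2 ^ (1 - s) * zetaSeries s (a / 2)) := by
  have hmellin := hasSum_mellin_cexp (s := s) (a := fun n : ℕ ↦ (-1 : ℂ) ^ n)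
    (p := fun n ↦ a + n) (F := fun t ↦ cexp (-a * t) / (1 + cexp (-t)))
    (re_add_natCast_pos ha) (by linarith)
    (fun _ ht ↦ hasSum_neg_one_pow_mul_cexp_neg_mul a ht)
    (by simpa using summable_one_div_re_add_nat_rpow ha hs)
  simp only [mellin, smul_eq_mul, ← mul_div_assoc] at hmellin
  refine hmellin.unique ?_
  simpa only [mul_assoc] using (hasSum_neg_one_pow_mul_cpow_neg_add_nat hs ha).mul_left (Gamma s)
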